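/- For positive integers k, l_1, l_2, p and nonnegative integers m, n_1, n_2, the product z_k z_p^m ⋆̄ z_{l_1} z_p^{n_1} z_{l_2} z_p^{n_2} equals: Σ_{0≤i_1≤i_2≤m} z_k(z_p^{i_1} z_{l_1} − z_p^{i_1-1} z_{p+l_1})[(z_p^{i_2-i_1} ⋆̄ z_p^{n_1}) z_{l_2} − (z_p^{i_2-i_1-1} ⋆̄ z_p^{n_1}) z_{p+l_2}](z_p^{m-i_2} ⋆̄ z_p^{n_2}) + Σ_{0≤i_1≤n_1, 0≤i_2≤m} z_{l_1}(z_p^{i_1} z_k − z_p^{i_1-1} z_{p+k})[(z_p^{i_2} ⋆̄ z_p^{n_1-i_1}) z_{l_2} − (z_p^{i_2-1} ⋆̄ z_p^{n_1-i_1}) z_{p+l_2}](z_p^{m-i_2} ⋆̄ z_p^{n_2}) − z_{l_1} z_p^{n_1} z_{k+l_2}(z_p^m ⋆̄ z_p^{n_2}) + Σ_{0≤i≤n_2} z_{l_1} z_p^{n_1} z_{l_2}(z_p^i z_k − z_p^{i-1} z_{p+k})(z_p^m ⋆̄ z_p^{n_2-i}) − Σ_{0≤i≤m} z_{k+l_1}[(z_p^i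 ⋆̄ z_p^{n_1}) z_{l_2} − (z_p^{i-1} ⋆̄ z_p^{n_1}) z_{p+l_2}](z_p^{m-i} ⋆̄ z_p^{n_2}), with convention z_p^{-1} = 0. -/

import Mathlib

open MonoidAlgebra Finset

abbrev H : Type := MonoidAlgebra ℚ (FreeMonoid ℕ+)

noncomputable def word (w : List ℕ+) : H := MonoidAlgebra.single (FreeMonoid.ofList w) 1

noncomputable def z (k : ℕ+) : H := word [k]

noncomputable def st : List ℕ+ → List ℕ+ → H
  | [], w => word w
  | k :: w1, [] => word (k :: w1)
  | k :: w1, l :: w2 =>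
      z k * st w1 (l :: w2) + z l * st (k :: w1) w2 + z (k + l) * st w1 w2
termination_by a b => a.length + b.length
decreasing_by all_goals (simp; try omega)
noncomputable def stbar : List ℕ+ → List ℕ+ → H
  | [], w => word w
  | k :: w1, [] => word (k :: w1)
  | k :: w1, l :: w2 =>
      z k * stbar w1 (l :: w2) + z l * stbar (k :: w1) w2 - z (k + l) * stbar w1 w2
termination_by a b => a.length + b.length
decreasing_by all_goals (simp; try omega)

/-! The whole computation rests on two expansion formulas, both proved by induction from the
recursion of `⋆̄`; the bracket `f(i) z_l − f(i-1) z_{p+l}` satisfies in `i` the same recursion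
as `⋆̄` itself, which is what makes the inductions close. Moving the first letter `k` of the left
factor past a block `z_p^n` of the right factor gives
  `z_k u ⋆̄ z_p^n v = Σ_{i ≤ n} (z_p^i z_k − z_p^{i-1} z_{p+k}) (u ⋆̄ z_p^{n-i} v)
      + z_p^n (z_k u ⋆̄ v − z_k (u ⋆̄ v))`,
and locating the letter `l` of the right factor gives
  `z_p^m ⋆̄ v z_l w = Σ_{i ≤ m} ((z_p^i ⋆̄ v) z_l − (z_p^{i-1} ⋆̄ v) z_{p+l}) (z_p^{m-i} ⋆̄ w)`.
After one step of the recursion on the left-hand side of the theorem, each of the three terms is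
expanded by these formulas; the first one twice, followed by a change of summation over the
triangle `0 ≤ i₁ ≤ i₂ ≤ m`. -/

@[simp] lemma word_nil : word [] = 1 := rfl

lemma word_append (u v : List ℕ+) : word (u ++ v) = word u * word v := by
  simp [word, MonoidAlgebra.single_mul_single]

lemma word_cons (a : ℕ+) (w : List ℕ+) : word (a :: w) = z a * word w :=
  word_append [a] w

@[simp] lemma stbar_nil_left (w : List ℕ+) : stbar [] w = word w := by
  rw [stbar]

@[simp] lemma stbar_nil_right (w : List ℕ+) : stbar w [] = word w := by
  cases w <;> rw [stbar]

lemma stbar_cons_cons (k l : ℕ+) (u v : List ℕ+) :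
    stbar (k :: u) (l :: v) =
      z k * stbar u (l :: v) + z l * stbar (k :: u) v - z (k + l) * stbar u v := by
  rw [stbar]

lemma stbar_comm (u v : List ℕ+) : stbar u v = stbar v u := by
  induction u generalizing v with
  | nil => simp
  | cons k u ihu =>
    induction v with
    | nil => simp
    | cons l v ihv =>
      rw [stbar_cons_cons, stbar_cons_cons, ihu (l :: v), ihu v, ihv, add_comm l k]
      abel

lemma stbar_replicate_succ_cons (p a : ℕ+) (v : List ℕ+) (i : ℕ) :
    stbar (List.replicate (i + 1) p) (a :: v) =
      z p * stbar (List.replicate i p) (a :: v) + z a * stbar (List.replicate (i + 1) p) v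
        - z (p + a) * stbar (List.replicate i p) v := by
  rw [List.replicate_succ, stbar_cons_cons]

/-- The bracket `(z_p^i ⋆̄ v) z_l − (z_p^{i-1} ⋆̄ v) z_{p+l}` of the paper, with `z_p^{-1} = 0`. -/
noncomputable def stbarDiff (p l : ℕ+) (v : List ℕ+) (i : ℕ) : H :=
  stbar (List.replicate i p) v * z l -
    if 1 ≤ i then stbar (List.replicate (i - 1) p) v * z (p + l) else 0

@[simp] lemma stbarDiff_zero (p l : ℕ+) (v : List ℕ+) : stbarDiff p l v 0 = word v * z l := by
  simp [stbarDiff]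

lemma stbarDiff_succ (p l : ℕ+) (v : List ℕ+) (i : ℕ) :
    stbarDiff p l v (i + 1) =
      stbar (List.replicate (i + 1) p) v * z l - stbar (List.replicate i p) v * z (p + l) := by
  simp [stbarDiff]

lemma stbarDiff_nil_succ (p l : ℕ+) (i : ℕ) :
    stbarDiff p l [] (i + 1) = z p * stbarDiff p l [] i - if i = 0 then z (p + l) else 0 := by
  cases i <;> simp [stbarDiff, List.replicate_succ, word_cons, mul_sub, mul_assoc]

lemma stbarDiff_cons_succ (p l a : ℕ+) (v : List ℕ+) (i : ℕ) :
    stbarDiff p l (a :: v) (i + 1) =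
      z p * stbarDiff p l (a :: v) i + z a * stbarDiff p l v (i + 1)
        - z (p + a) * stbarDiff p l v i := by
  cases i <;>
    simp only [stbarDiff_succ, stbarDiff_zero, stbar_replicate_succ_cons, List.replicate_zero,
      stbar_nil_left, word_cons] <;>
    noncomm_ring

theorem stbar_cons_replicate_append (k p : ℕ+) (u v : List ℕ+) (n : ℕ) :
    stbar (k :: u) (List.replicate n p ++ v) =
      ∑ i ∈ range (n + 1), stbarDiff p k [] i * stbar u (List.replicate (n - i) p ++ v)
        + word (List.replicate n p) * (stbar (k :: u) v - z k * stbar u v) := by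
  induction n with
  | zero => simp
  | succ n ih =>
    have hsum : ∑ i ∈ range (n + 1),
        stbarDiff p k [] (i + 1) * stbar u (List.replicate (n - i) p ++ v) =
        z p * ∑ i ∈ range (n + 1), stbarDiff p k [] i * stbar u (List.replicate (n - i) p ++ v)
          - z (p + k) * stbar u (List.replicate n p ++ v) := by
      simp [stbarDiff_nil_succ, sub_mul, ite_mul, sum_sub_distrib, mul_sum, mul_assoc]
    conv_lhs => rw [List.replicate_succ, List.cons_append, stbar_cons_cons, ih, add_comm k p]
    rw [sum_range_succ' _ (n + 1)]
    simp only [Nat.add_sub_add_right, hsum, stbarDiff_zero, Nat.sub_zero, word_nil, one_mul]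
    rw [List.replicate_succ, List.cons_append, word_cons]
    noncomm_ring

theorem stbar_cons_replicate (k p : ℕ+) (u : List ℕ+) (n : ℕ) :
    stbar (k :: u) (List.replicate n p) =
      ∑ i ∈ range (n + 1), stbarDiff p k [] i * stbar u (List.replicate (n - i) p) := by
  simpa [word_cons] using stbar_cons_replicate_append k p u [] n

theorem stbar_replicate_append_cons (p l : ℕ+) (v w : List ℕ+) (m : ℕ) :
    stbar (List.replicate m p) (v ++ l :: w) =
      ∑ i ∈ range (m + 1), stbarDiff p l v i * stbar (List.replicate (m - i) p) w := by
  induction v generalizing m with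
  | nil =>
    rw [List.nil_append, stbar_comm, stbar_cons_replicate]
    exact sum_congr rfl fun i _ => by rw [stbar_comm]
  | cons a v ihv =>
    induction m with
    | zero => simp [word_append, word_cons, mul_assoc]
    | succ m ihm =>
      rw [List.cons_append, stbar_replicate_succ_cons, ← List.cons_append, ihm, ihv, ihv,
        sum_range_succ' _ (m + 1), sum_range_succ' _ (m + 1)]
      simp only [Nat.add_sub_add_right, stbarDiff_cons_succ, stbarDiff_zero, word_cons,
        add_mul, sub_mul, sum_add_distrib, sum_sub_distrib, mul_sum, mul_add, mul_assoc]
      abel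

theorem stbar_replicate_cons_append_cons (p l l' : ℕ+) (v w : List ℕ+) (m : ℕ) :
    stbar (List.replicate m p) (l :: (v ++ l' :: w)) =
      ∑ i2 ∈ range (m + 1), ∑ i1 ∈ range (i2 + 1),
        stbarDiff p l [] i1 * (stbarDiff p l' v (i2 - i1) * stbar (List.replicate (m - i2) p) w) := by
  have hsplit := stbar_replicate_append_cons p l [] (v ++ l' :: w) m
  rw [List.nil_append] at hsplit
  simp only [hsplit, stbar_replicate_append_cons, mul_sum]
  calc _ = ∑ i ∈ range (m + 1), ∑ j ∈ range (m + 1 - i),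
          stbarDiff p l [] i * (stbarDiff p l' v j * stbar (List.replicate (m - i - j) p) w) :=
        sum_congr rfl fun i hi => by rw [Nat.sub_add_comm (Nat.le_of_lt_succ (mem_range.mp hi))]
    _ = _ := (sum_range_diag_flip _ _).symm
    _ = _ := sum_congr rfl fun i2 hi2 => sum_congr rfl fun i1 hi1 => by
        rw [Nat.sub_sub, Nat.add_sub_cancel' (Nat.le_of_lt_succ (mem_range.mp hi1))]

theorem stbar_one_two (k l1 l2 p : ℕ+) (m n1 n2 : ℕ) :
    stbar (k :: List.replicate m p) (l1 :: (List.replicate n1 p ++ l2 :: List.replicate n2 p)) =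
      (∑ i2 ∈ Finset.range (m + 1), ∑ i1 ∈ Finset.range (i2 + 1),
        z k * (word (List.replicate i1 p) * z l1
            - if 1 ≤ i1 then word (List.replicate (i1 - 1) p) * z (p + l1) else 0)
        * (stbar (List.replicate (i2 - i1) p) (List.replicate n1 p) * z l2
            - if i1 < i2 then
                stbar (List.replicate (i2 - i1 - 1) p) (List.replicate n1 p) * z (p + l2)
              else 0)
        * stbar (List.replicate (m - i2) p) (List.replicate n2 p))
      + (∑ i1 ∈ Finset.range (n1 + 1), ∑ i2 ∈ Finset.range (m + 1),
        z l1 * (word (List.replicate i1 p) * z k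
            - if 1 ≤ i1 then word (List.replicate (i1 - 1) p) * z (p + k) else 0)
        * (stbar (List.replicate i2 p) (List.replicate (n1 - i1) p) * z l2
            - if 1 ≤ i2 then
                stbar (List.replicate (i2 - 1) p) (List.replicate (n1 - i1) p) * z (p + l2)
              else 0)
        * stbar (List.replicate (m - i2) p) (List.replicate n2 p))
      - word (l1 :: List.replicate n1 p) * z (k + l2)
          * stbar (List.replicate m p) (List.replicate n2 p)
      + (∑ i ∈ Finset.range (n2 + 1),
        word (l1 :: List.replicate n1 p) * z l2
        * (word (List.replicate i p) * z k
            - if 1 ≤ i then word (List.replicate (i - 1) p) * z (p + k) else 0)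
        * stbar (List.replicate m p) (List.replicate (n2 - i) p))
      - (∑ i ∈ Finset.range (m + 1),
        z (k + l1)
        * (stbar (List.replicate i p) (List.replicate n1 p) * z l2
            - if 1 ≤ i then stbar (List.replicate (i - 1) p) (List.replicate n1 p) * z (p + l2)
              else 0)
        * stbar (List.replicate (m - i) p) (List.replicate n2 p)) := by
  rw [stbar_cons_cons, stbar_replicate_cons_append_cons, stbar_cons_replicate_append,
    stbar_cons_cons k l2, stbar_cons_replicate, stbar_replicate_append_cons]
  simp only [stbar_replicate_append_cons]
  simp only [stbarDiff, stbar_nil_right, Nat.one_le_iff_ne_zero, Nat.sub_ne_zero_iff_lt,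
    word_cons, mul_sum, mul_add, mul_sub, sub_mul, mul_ite, ite_mul, mul_zero, zero_mul,
    mul_assoc, sum_sub_distrib]
  abel
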